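/- arXiv:2309.09106 — 2 statements merged into one kernel-verified Lean document; each statement's English description precedes it below -/
import Mathlib

section
/- The number of connected subgraphs with m vertices containing a fixed vertex in a graph of maximum degree Δ is at most (eΔ)^m. -/
/-!
Label the neighbours of every vertex by `0, …, Δ - 1`. A connected set `S ∋ v` with `|S| = m` is
explored from `[v]`: at step `k` the `k`-th vertex found so far is processed, and its neighbours
in `S` not yet found are appended in label order. Recording the pairs `(k, ℓ)` for which the
neighbour labelled `ℓ` of the `k`-th vertex was appended gives an `(m - 1)`-subset of
`[m] × [Δ]`, and replaying the exploration along these pairs alone recovers `S`. Hence there are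
at most `C(mΔ, m - 1) ≤ (mΔ)^(m-1) / (m-1)! = Δ^(m-1) m^m / m! ≤ (eΔ)^m` such sets.
-/

open Finset

namespace Exploration

variable {V : Type*}

def child (nbr : V → List V) (L : List V) (k ℓ : ℕ) : Option V :=
  L[k]?.bind fun u => (nbr u)[ℓ]?

open Classical in
noncomputable def batch (nbr : V → List V) (Δ : ℕ) (keep : List V → ℕ → ℕ → Prop)
    (L : List V) (k : ℕ) : List V :=
  (List.range Δ).filterMap fun ℓ => if keep L k ℓ then child nbr L k ℓ else none

noncomputable def grow (nbr : V → List V) (Δ : ℕ) (v : V)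
    (keep : List V → ℕ → ℕ → Prop) : ℕ → List V
  | 0 => [v]
  | k + 1 => grow nbr Δ v keep k ++ batch nbr Δ keep (grow nbr Δ v keep k) k

section grow

variable {nbr : V → List V} {Δ : ℕ} {v : V} {keep : List V → ℕ → ℕ → Prop}

lemma grow_prefix_of_le {k K : ℕ} (h : k ≤ K) :
    grow nbr Δ v keep k <+: grow nbr Δ v keep K := by
  induction K, h using Nat.le_induction with
  | base => exact List.prefix_refl _
  | succ K _ ih => exact ih.trans (List.prefix_append _ _)

lemma grow_eq_of_length_le {k K : ℕ} (hlen : (grow nbr Δ v keep k).length ≤ k) (h : k ≤ K) :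
    grow nbr Δ v keep K = grow nbr Δ v keep k := by
  induction K, h using Nat.le_induction with
  | base => rfl
  | succ K hkK ih =>
    have hnil : batch nbr Δ keep (grow nbr Δ v keep k) K = [] := by
      refine List.filterMap_eq_nil_iff.mpr fun ℓ _ => ?_
      simp [child, List.getElem?_eq_none (hlen.trans hkK)]
    rw [grow, ih, hnil, List.append_nil]

lemma lt_length_grow_self {i m : ℕ} (hi : i < (grow nbr Δ v keep m).length) (him : i ≤ m) :
    i < (grow nbr Δ v keep i).length := by
  by_contra! hlen
  rw [grow_eq_of_length_le hlen him] at hi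
  omega

lemma grow_congr {keep' : List V → ℕ → ℕ → Prop} {m : ℕ}
    (h : ∀ k < m, ∀ ℓ < Δ,
      keep' (grow nbr Δ v keep k) k ℓ ↔ keep (grow nbr Δ v keep k) k ℓ) :
    grow nbr Δ v keep' m = grow nbr Δ v keep m := by
  induction m with
  | zero => rfl
  | succ m ih =>
    rw [grow, grow, ih fun k hk => h k (by omega), batch, batch]
    refine congrArg _ (List.filterMap_congr fun ℓ hℓ => ?_)
    congr 1
    exact propext (h m (by omega) ℓ (List.mem_range.mp hℓ))

end grow

section explore

variable (nbr : V → List V) (Δ : ℕ) (v : V)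

def fresh (S : Finset V) (L : List V) (k ℓ : ℕ) : Prop :=
  ∃ w ∈ S, child nbr L k ℓ = some w ∧ w ∉ L

noncomputable def explore (S : Finset V) : ℕ → List V :=
  grow nbr Δ v (fresh nbr S)

noncomputable def replay (T : Finset (ℕ × ℕ)) : ℕ → List V :=
  grow nbr Δ v fun _ k ℓ => (k, ℓ) ∈ T

open Classical in
noncomputable def code (S : Finset V) (m : ℕ) : Finset (ℕ × ℕ) :=
  {p ∈ range m ×ˢ range Δ | fresh nbr S (explore nbr Δ v S p.1) p.1 p.2}

variable {nbr Δ v} {S : Finset V}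

lemma child_inj (hnod : ∀ u, (nbr u).Nodup) {L : List V} {k ℓ ℓ' : ℕ} {w : V}
    (h : child nbr L k ℓ = some w) (h' : child nbr L k ℓ' = some w) : ℓ = ℓ' := by
  unfold child at h h'
  rcases hu : L[k]? with _ | u
  · simp [hu] at h
  · simp only [hu, Option.bind_some] at h h'
    exact (List.getElem?_inj (List.getElem?_eq_some_iff.mp h).1 (hnod u)).mp (h.trans h'.symm)

lemma mem_batch_fresh {L : List V} {k : ℕ} {w : V}
    (hw : w ∈ batch nbr Δ (fresh nbr S) L k) : w ∈ S ∧ w ∉ L := by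
  obtain ⟨ℓ, -, hℓ⟩ := List.mem_filterMap.mp hw
  split_ifs at hℓ with hfresh
  obtain ⟨x, hxS, hx, hxL⟩ := hfresh
  obtain rfl : x = w := Option.some.inj (hx.symm.trans hℓ)
  exact ⟨hxS, hxL⟩

lemma explore_succ (k : ℕ) :
    explore nbr Δ v S (k + 1) =
      explore nbr Δ v S k ++ batch nbr Δ (fresh nbr S) (explore nbr Δ v S k) k :=
  rfl

lemma mem_of_mem_explore (hv : v ∈ S) {k : ℕ} {w : V} (hw : w ∈ explore nbr Δ v S k) :
    w ∈ S := by
  induction k generalizing w with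
  | zero =>
    obtain rfl : w = v := by simpa [explore, grow] using hw
    exact hv
  | succ k ih =>
    rcases List.mem_append.mp hw with hw | hw
    · exact ih hw
    · exact (mem_batch_fresh hw).1

lemma explore_nodup (hnod : ∀ u, (nbr u).Nodup) (k : ℕ) : (explore nbr Δ v S k).Nodup := by
  induction k with
  | zero => simp [explore, grow]
  | succ k ih =>
    rw [explore_succ]
    refine List.Nodup.append ih (List.nodup_range.filterMap fun ℓ ℓ' w h h' => ?_)
      fun w hw hw' => (mem_batch_fresh hw').2 hw
    split_ifs at h h'
    · exact child_inj hnod h h'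
    all_goals simp at h h'

lemma mem_explore_succ_of_child {k ℓ : ℕ} {x : V}
    (hc : child nbr (explore nbr Δ v S k) k ℓ = some x) (hℓ : ℓ < Δ) (hx : x ∈ S) :
    x ∈ explore nbr Δ v S (k + 1) := by
  rw [explore_succ]
  by_cases hxL : x ∈ explore nbr Δ v S k
  · exact List.mem_append_left _ hxL
  · refine List.mem_append_right _ (List.mem_filterMap.mpr ⟨ℓ, List.mem_range.mpr hℓ, ?_⟩)
    rw [if_pos ⟨x, hx, hc, hxL⟩, hc]

open Classical in
lemma length_batch_fresh (L : List V) (k : ℕ) :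
    (batch nbr Δ (fresh nbr S) L k).length = #{ℓ ∈ range Δ | fresh nbr S L k ℓ} := by
  rw [batch, List.length_filterMap_eq_countP, ← Nat.count_eq_card_filter_range, Nat.count]
  refine List.countP_congr fun ℓ _ => ?_
  by_cases hf : fresh nbr S L k ℓ
  · obtain ⟨w, -, hw, -⟩ := id hf
    simp [hf, hw]
  · simp [hf]

open Classical in
lemma card_code (m : ℕ) :
    #(code nbr Δ v S m) =
      ∑ k ∈ range m, #{ℓ ∈ range Δ | fresh nbr S (explore nbr Δ v S k) k ℓ} := by
  simp only [code, card_filter, sum_product]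

lemma length_explore (m : ℕ) : (explore nbr Δ v S m).length = #(code nbr Δ v S m) + 1 := by
  induction m with
  | zero => simp [explore, grow, card_code]
  | succ m ih =>
    rw [explore_succ, List.length_append, ih, length_batch_fresh, card_code, card_code,
      sum_range_succ]
    ring

lemma replay_code {k m : ℕ} (hkm : k ≤ m) :
    replay nbr Δ v (code nbr Δ v S m) k = explore nbr Δ v S k :=
  grow_congr fun j hj ℓ hℓ => by
    simp only [code, mem_filter, mem_product, mem_range]
    exact ⟨And.right, And.intro ⟨by omega, hℓ⟩⟩

variable {G : SimpleGraph V}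

-- Were some `w ∈ S` never found, a dart of `G[S]` would leave the found vertices from a vertex
-- at index `j < |S|`; but that vertex is processed at step `j`, which finds the other end.
lemma explore_toFinset_eq [DecidableEq V] (hnod : ∀ u, (nbr u).Nodup)
    (hlen : ∀ u, (nbr u).length ≤ Δ) (hadj : ∀ u w, G.Adj u w → w ∈ nbr u) (hv : v ∈ S)
    (hconn : (G.induce (S : Set V)).Connected) :
    (explore nbr Δ v S #S).toFinset = S := by
  set L := explore nbr Δ v S #S
  have hLS : L.toFinset ⊆ S := fun w hw => mem_of_mem_explore hv (List.mem_toFinset.mp hw)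
  have hlenL : L.length ≤ #S := by
    rw [← List.toFinset_card_of_nodup (explore_nodup hnod _)]
    exact card_le_card hLS
  refine Subset.antisymm hLS fun w hwS => ?_
  by_contra hwL
  have hvL : v ∈ L := (grow_prefix_of_le (Nat.zero_le _)).subset (List.mem_singleton_self v)
  obtain ⟨p⟩ := hconn.preconnected ⟨v, hv⟩ ⟨w, hwS⟩
  obtain ⟨d, -, hu, hx⟩ := p.exists_boundary_dart {x | (x : V) ∈ L} hvL (by simpa using hwL)
  obtain ⟨j, hj, hju⟩ := List.getElem_of_mem hu
  have hjS : j < #S := by omega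
  have hjj : j < (explore nbr Δ v S j).length := lt_length_grow_self hj hjS.le
  have hju' : (explore nbr Δ v S j)[j] = d.fst :=
    ((grow_prefix_of_le hjS.le).getElem hjj).trans hju
  obtain ⟨ℓ, hℓ, hℓx⟩ := List.getElem_of_mem (hadj d.fst d.snd d.adj)
  have hc : child nbr (explore nbr Δ v S j) j ℓ = some (d.snd : V) := by
    rw [child, List.getElem?_eq_getElem hjj, hju', Option.bind_some, List.getElem?_eq_getElem hℓ,
      hℓx]
  exact hx ((grow_prefix_of_le hjS).subset
    (mem_explore_succ_of_child hc (hℓ.trans_le (hlen _)) d.snd.2))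

lemma exists_replay_eq [DecidableEq V] (hnod : ∀ u, (nbr u).Nodup)
    (hlen : ∀ u, (nbr u).length ≤ Δ) (hadj : ∀ u w, G.Adj u w → w ∈ nbr u) (hv : v ∈ S)
    (hconn : (G.induce (S : Set V)).Connected) :
    ∃ T ∈ powersetCard (#S - 1) (range #S ×ˢ range Δ),
      (replay nbr Δ v T #S).toFinset = S := by
  classical
  have hS := explore_toFinset_eq hnod hlen hadj hv hconn
  refine ⟨code nbr Δ v S #S, mem_powersetCard.mpr ⟨filter_subset _ _, ?_⟩, ?_⟩
  · have hcard := length_explore (nbr := nbr) (Δ := Δ) (v := v) (S := S) #S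
    rw [← List.toFinset_card_of_nodup (explore_nodup hnod _), hS] at hcard
    omega
  · rw [replay_code le_rfl, hS]

end explore

end Exploration

open Nat in
lemma choose_mul_pred_le_exp_mul_pow {Δ : ℕ} (hΔ : 1 ≤ Δ) (m : ℕ) :
    (((m * Δ).choose (m - 1) : ℕ) : ℝ) ≤ (Real.exp 1 * Δ) ^ m := by
  cases m with
  | zero => simp
  | succ n =>
    have hfac : ((n + 1)! : ℝ) = (n + 1) * n ! := by push_cast [factorial_succ]; ring
    calc (((n + 1) * Δ).choose (n + 1 - 1) : ℝ) ≤ (((n + 1) * Δ : ℕ) : ℝ) ^ n / n ! :=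
          choose_le_pow_div _ _
      _ = ((n + 1 : ℕ) : ℝ) ^ (n + 1) / (n + 1)! * Δ ^ n := by
          rw [hfac]; push_cast; field_simp; rw [mul_pow]; ring
      _ ≤ Real.exp (n + 1 : ℕ) * Δ ^ (n + 1) := by
          gcongr
          · exact Real.pow_div_factorial_le_exp _ (Nat.cast_nonneg _) _
          · exact_mod_cast hΔ
          · omega
      _ = (Real.exp 1 * Δ) ^ (n + 1) := by rw [mul_pow, ← Real.exp_nat_mul, mul_one]

/-- The number of connected `m`-element vertex subsets containing a fixed vertex `v`
in a (possibly infinite) graph of maximum degree `Δ ≥ 1` is at most `(e·Δ)^m`. -/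
theorem stmt_0 {V : Type*} (G : SimpleGraph V) (Δ : ℕ) (hΔ : 1 ≤ Δ)
    (hlf : ∀ w : V, (G.neighborSet w).Finite)
    (hdeg : ∀ w : V, (G.neighborSet w).ncard ≤ Δ)
    (v : V) (m : ℕ) :
    {s : Finset V | v ∈ s ∧ s.card = m ∧ (G.induce (s : Set V)).Connected}.Finite ∧
      (({s : Finset V | v ∈ s ∧ s.card = m ∧
          (G.induce (s : Set V)).Connected}.ncard : ℝ))
        ≤ (Real.exp 1 * Δ) ^ m := by
  classical
  set nbr : V → List V := fun u => (hlf u).toFinset.toList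
  have hnod : ∀ u, (nbr u).Nodup := fun u => nodup_toList _
  have hlen : ∀ u, (nbr u).length ≤ Δ := fun u => by
    rw [length_toList, ← Set.ncard_eq_toFinset_card _ (hlf u)]
    exact hdeg u
  have hadj : ∀ u w, G.Adj u w → w ∈ nbr u := fun u w h =>
    mem_toList.mpr ((hlf u).mem_toFinset.mpr h)
  set sets := {s : Finset V | v ∈ s ∧ s.card = m ∧ (G.induce (s : Set V)).Connected}
  set codes := powersetCard (m - 1) (range m ×ˢ range Δ)
  have hsub : sets ⊆ codes.image fun T => (Exploration.replay nbr Δ v T m).toFinset := by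
    rintro s ⟨hv, rfl, hconn⟩
    obtain ⟨T, hT, hTs⟩ := Exploration.exists_replay_eq hnod hlen hadj hv hconn
    exact mem_coe.mpr (mem_image.mpr ⟨T, hT, hTs⟩)
  have hcount : sets.ncard ≤ (m * Δ).choose (m - 1) :=
    calc sets.ncard ≤ _ := Set.ncard_le_ncard hsub (finite_toSet _)
      _ ≤ #codes := by rw [Set.ncard_coe_finset]; exact card_image_le
      _ = (m * Δ).choose (m - 1) := by rw [card_powersetCard, card_product, card_range, card_range]
  exact ⟨(finite_toSet _).subset hsub,
    (Nat.cast_le.mpr hcount).trans (choose_mul_pred_le_exp_mul_pow hΔ m)⟩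
end

section
/- If f : Finset S → ℝ satisfies f(V) = Σ_{W ⊆ V} (−1)^{|V|−|W|} g(W), where g(V) = g(V₁) + g(V₂) whenever V = V₁ ⊔ V₂ is any partition of V into two sets with no pair of elements from V₁ and V₂ adjacent (in a fixed graph structure on S), then f(V) = 0 for every disconnected V (i.e., every V admitting such a nontrivial decomposition). -/
lemma stmt_3_aux {S : Type*} [DecidableEq S] (V : Finset S) (h : V.Nonempty) :
    ∑ B ∈ V.powerset, (-1 : ℝ) ^ (V.card - B.card) = 0 := by
  have h1 : ∑ B ∈ V.powerset, (-1 : ℝ) ^ (V.card - B.card)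
      = (-1 : ℝ) ^ V.card * ∑ B ∈ V.powerset, (-1 : ℝ) ^ B.card := by
    rw [Finset.mul_sum]
    refine Finset.sum_congr rfl fun B hB => ?_
    have hle := Finset.card_le_card (Finset.mem_powerset.mp hB)
    obtain ⟨m, hm⟩ := Nat.exists_eq_add_of_le hle
    rw [hm]
    rw [show B.card + m - B.card = m by omega, pow_add]
    ring_nf
    rw [← pow_add, show m + B.card * 2 = m + 2 * B.card by ring, pow_add, pow_mul]
    norm_num
  have h2 : ∑ B ∈ V.powerset, (-1 : ℝ) ^ B.card = 0 := by
    have := Finset.sum_powerset_neg_one_pow_card_of_nonempty (x := V) h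
    have : ((∑ m ∈ V.powerset, (-1 : ℤ) ^ m.card : ℤ) : ℝ) = 0 := by rw [this]; norm_num
    simpa using this
  rw [h1, h2, mul_zero]

/-- If `f` is obtained from `g` by Möbius inversion over subsets, and `g` is additive
over decompositions into disjoint, mutually non-adjacent pieces, then `f` vanishes on
every disconnected set. -/
theorem stmt_3 {S : Type*} [DecidableEq S] (G : SimpleGraph S)
    (g f : Finset S → ℝ)
    (hg : ∀ V₁ V₂ : Finset S, Disjoint V₁ V₂ →
      (∀ a ∈ V₁, ∀ b ∈ V₂, ¬ G.Adj a b) → g (V₁ ∪ V₂) = g V₁ + g V₂)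
    (hf : ∀ V, f V = ∑ W ∈ V.powerset, (-1 : ℝ) ^ (V.card - W.card) * g W) :
    ∀ V V₁ V₂ : Finset S, V = V₁ ∪ V₂ → Disjoint V₁ V₂ →
      V₁.Nonempty → V₂.Nonempty →
      (∀ a ∈ V₁, ∀ b ∈ V₂, ¬ G.Adj a b) → f V = 0 := by
  intro V V₁ V₂ hV hdisj h1 h2 hadj
  rw [hf, hV]
  have hcard : (V₁ ∪ V₂).card = V₁.card + V₂.card := Finset.card_union_of_disjoint hdisj
  have key : ∑ W ∈ (V₁ ∪ V₂).powerset, (-1 : ℝ) ^ ((V₁ ∪ V₂).card - W.card) * g W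
      = ∑ p ∈ V₁.powerset ×ˢ V₂.powerset,
          ((-1 : ℝ) ^ (V₁.card - p.1.card) * (-1 : ℝ) ^ (V₂.card - p.2.card)
            * (g p.1 + g p.2)) := by
    refine Finset.sum_nbij' (fun W => (W ∩ V₁, W ∩ V₂)) (fun p => p.1 ∪ p.2) ?_ ?_ ?_ ?_ ?_
    · intro W hW
      simp only [Finset.mem_product, Finset.mem_powerset]
      exact ⟨Finset.inter_subset_right, Finset.inter_subset_right⟩
    · intro p hp
      simp only [Finset.mem_product, Finset.mem_powerset] at hp ⊢
      exact Finset.union_subset_union hp.1 hp.2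
    · intro W hW
      simp only [Finset.mem_powerset] at hW
      show W ∩ V₁ ∪ W ∩ V₂ = W
      rw [← Finset.inter_union_distrib_left, Finset.inter_eq_left.mpr hW]
    · intro p hp
      simp only [Finset.mem_product, Finset.mem_powerset] at hp
      obtain ⟨hA, hB⟩ := hp
      have hAB : Disjoint p.1 p.2 := hdisj.mono hA hB
      have d1 : p.2 ∩ V₁ = ∅ :=
        Finset.disjoint_iff_inter_eq_empty.mp (hdisj.symm.mono_left hB)
      have d2 : p.1 ∩ V₂ = ∅ :=
        Finset.disjoint_iff_inter_eq_empty.mp (hdisj.mono_left hA)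
      have e1 : (p.1 ∪ p.2) ∩ V₁ = p.1 := by
        rw [Finset.union_inter_distrib_right, Finset.inter_eq_left.mpr hA, d1,
          Finset.union_empty]
      have e2 : (p.1 ∪ p.2) ∩ V₂ = p.2 := by
        rw [Finset.union_inter_distrib_right, Finset.inter_eq_left.mpr hB, d2,
          Finset.empty_union]
      exact Prod.ext e1 e2
    · intro W hW
      simp only [Finset.mem_powerset] at hW
      dsimp only
      set A := W ∩ V₁
      set B := W ∩ V₂
      have hA : A ⊆ V₁ := Finset.inter_subset_right
      have hB : B ⊆ V₂ := Finset.inter_subset_right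
      have hAB : Disjoint A B := hdisj.mono hA hB
      have hWeq : W = A ∪ B := by
        rw [← Finset.inter_union_distrib_left, Finset.inter_eq_left.mpr hW]
      have hcardW : W.card = A.card + B.card := by
        rw [hWeq]; exact Finset.card_union_of_disjoint hAB
      have hgW : g W = g A + g B := by
        rw [hWeq]
        exact hg A B hAB fun a ha b hb => hadj a (hA ha) b (hB hb)
      rw [hgW, hcardW, hcard, ← pow_add]
      congr 2
      have := Finset.card_le_card hA
      have := Finset.card_le_card hB
      omega
  rw [key]
  rw [Finset.sum_product]
  have split : ∀ A ∈ V₁.powerset,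
      ∑ B ∈ V₂.powerset, ((-1 : ℝ) ^ (V₁.card - A.card) * (-1 : ℝ) ^ (V₂.card - B.card)
        * (g A + g B))
      = g A * (-1 : ℝ) ^ (V₁.card - A.card) * (∑ B ∈ V₂.powerset, (-1 : ℝ) ^ (V₂.card - B.card))
        + (-1 : ℝ) ^ (V₁.card - A.card)
          * ∑ B ∈ V₂.powerset, (-1 : ℝ) ^ (V₂.card - B.card) * g B := by
    intro A hA
    rw [Finset.mul_sum, Finset.mul_sum, ← Finset.sum_add_distrib]
    refine Finset.sum_congr rfl fun B hB => ?_
    ring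
  rw [Finset.sum_congr rfl split]
  rw [Finset.sum_add_distrib]
  rw [stmt_3_aux V₂ h2]
  simp only [mul_zero, Finset.sum_const_zero, zero_add]
  rw [← Finset.sum_mul]
  rw [stmt_3_aux V₁ h1, zero_mul]
end
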